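/- arXiv:1706.08976 — 5 statements merged into one kernel-verified Lean document; each statement's English description precedes it below -/
import Mathlib

section
/- Let S be an F-algebra and suppose that for every natural number n and every F-algebra homomorphism φ : Mₙ(F) → Mₙ(S) there exists an invertible matrix c ∈ Mₙ(S) such that φ(x) = c x c⁻¹ for every x ∈ Mₙ(F). Then S is a Skolem–Noether algebra. -/
open scoped TensorProduct

universe u v

/-- `S` is a Skolem–Noether `F`-algebra: for every central simple `F`-algebra `R`
(finite-dimensional, simple, with center `F·1`) and every `F`-algebra homomorphism
`φ : R → R ⊗[F] S` there is an invertible `c ∈ R ⊗[F] S` with `φ x = c (x ⊗ 1) c⁻¹`. -/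
def IsSkolemNoether (F : Type u) (S : Type v) [Field F] [Ring S] [Algebra F S] : Prop :=
  ∀ (R : Type u) [Ring R] [Algebra F R], FiniteDimensional F R → IsSimpleRing R →
    Algebra.IsCentral F R → ∀ φ : R →ₐ[F] R ⊗[F] S,
      ∃ c : (R ⊗[F] S)ˣ, ∀ x : R,
        φ x = Units.val c * (x ⊗ₜ[F] (1 : S)) * Units.val c⁻¹

/-!
A central simple algebra `R` has `R ⊗ Rᵐᵒᵖ ≅ End_F R ≅ Mₘ(F)`: the map is injective because
`R ⊗ Rᵐᵒᵖ` is simple (a nonzero ideal of `R ⊗ B` contains an element of minimal support in a basis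
of `B`; scaling one coordinate to `1` and taking commutators with `R ⊗ 1` shows it lies in
`1 ⊗ B`), and the dimensions agree. Applying the matrix hypothesis to `id ⊗ φ` on
`Rᵐᵒᵖ ⊗ R ≅ Mₘ(F)` gives a unit `U` of `Rᵐᵒᵖ ⊗ (R ⊗ S)` that fixes `Rᵐᵒᵖ ⊗ 1` and conjugates
`1 ⊗ (x ⊗ 1)` to `1 ⊗ φ x`. As `Rᵐᵒᵖ` is central, the centralizer of `Rᵐᵒᵖ ⊗ 1` is `1 ⊗ (R ⊗ S)`,
so `U = 1 ⊗ u` and `u` is the required unit.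
-/

open Algebra.TensorProduct in
theorem Subalgebra.centralizer_range_includeLeft_of_isCentral {R A B : Type*} [CommSemiring R]
    [Semiring A] [Algebra R A] [Semiring B] [Algebra R B] [Algebra.IsCentral R A]
    [Module.Free R B] :
    centralizer R (includeLeft : A →ₐ[R] A ⊗[R] B).range =
      (includeRight : B →ₐ[R] A ⊗[R] B).range := by
  rw [centralizer_coe_range_includeLeft_eq_center_tensorProduct,
    Algebra.IsCentral.center_eq_bot, map_range]
  simp [AlgHom.range_comp, Subalgebra.range_val, Algebra.map_bot]

open Algebra.TensorProduct in
theorem Algebra.TensorProduct.exists_map_includeRight_eq_of_commute {F A B : Type*} [Field F]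
    [Ring A] [Algebra F A] [Ring B] [Algebra F B] [Algebra.IsCentral F A] [Nontrivial A]
    (U : (A ⊗[F] B)ˣ) (hU : ∀ a : A, Commute (a ⊗ₜ[F] (1 : B)) U) :
    ∃ u : Bˣ, Units.map (includeRight : B →ₐ[F] A ⊗[F] B).toMonoidHom u = U := by
  have mem_range : ∀ V : (A ⊗[F] B)ˣ, (∀ a : A, Commute (a ⊗ₜ[F] (1 : B)) V) →
      (V : A ⊗[F] B) ∈ (includeRight : B →ₐ[F] A ⊗[F] B).range := fun V hV ↦ by
    rw [← Subalgebra.centralizer_range_includeLeft_of_isCentral]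
    rintro _ ⟨a, rfl⟩
    exact hV a
  obtain ⟨b, hb⟩ := (AlgHom.mem_range _).mp (mem_range U hU)
  obtain ⟨b', hb'⟩ := (AlgHom.mem_range _).mp (mem_range U⁻¹ fun a ↦ (hU a).units_inv_right)
  have hinj := includeRight_injective (A := A) (B := B) (algebraMap F A).injective
  refine ⟨⟨b, b', hinj ?_, hinj ?_⟩, Units.ext hb⟩
  · rw [map_mul, hb, hb', Units.mul_inv, map_one]
  · rw [map_mul, hb, hb', Units.inv_mul, map_one]

namespace TensorProduct

variable {F A B ι : Type*} [Field F] [Ring A] [Algebra F A] [Ring B] [Algebra F B]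
  [DecidableEq ι] (𝒞 : Module.Basis ι F B)

theorem equivFinsuppOfBasisRight_tmul_one_mul (u : A) (z : A ⊗[F] B) :
    equivFinsuppOfBasisRight 𝒞 ((u ⊗ₜ 1) * z) =
      (equivFinsuppOfBasisRight 𝒞 z).mapRange (u * ·) (mul_zero u) := by
  induction z with
  | zero => simp
  | tmul a b => ext; simp [Algebra.TensorProduct.tmul_mul_tmul]
  | add z w hz hw => simp [mul_add, hz, hw, Finsupp.mapRange_add]

theorem equivFinsuppOfBasisRight_mul_tmul_one (u : A) (z : A ⊗[F] B) :
    equivFinsuppOfBasisRight 𝒞 (z * (u ⊗ₜ 1)) =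
      (equivFinsuppOfBasisRight 𝒞 z).mapRange (· * u) (zero_mul u) := by
  induction z with
  | zero => simp
  | tmul a b => ext; simp [Algebra.TensorProduct.tmul_mul_tmul]
  | add z w hz hw => simp [add_mul, hz, hw, Finsupp.mapRange_add]

variable [IsSimpleRing A]

theorem exists_mem_support_subset_equivFinsuppOfBasisRight_eq_one
    {I : TwoSidedIdeal (A ⊗[F] B)} {z : A ⊗[F] B} (hz : z ∈ I) {j : ι}
    (hj : j ∈ (equivFinsuppOfBasisRight 𝒞 z).support) :
    ∃ w ∈ I, (equivFinsuppOfBasisRight 𝒞 w).support ⊆ (equivFinsuppOfBasisRight 𝒞 z).support ∧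
      equivFinsuppOfBasisRight 𝒞 w j = 1 := by
  set κ := equivFinsuppOfBasisRight (M := A) 𝒞
  let J : TwoSidedIdeal A := .mk' {a | ∃ w ∈ I, (κ w).support ⊆ (κ z).support ∧ κ w j = a}
    ⟨0, I.zero_mem, by simp, by simp⟩
    (by
      rintro _ _ ⟨w, hw, hws, rfl⟩ ⟨w', hw', hws', rfl⟩
      refine ⟨w + w', I.add_mem hw hw', ?_, by simp⟩
      simpa using Finsupp.support_add.trans (Finset.union_subset hws hws'))
    (by
      rintro _ ⟨w, hw, hws, rfl⟩
      exact ⟨-w, I.neg_mem hw, by simpa using hws, by simp⟩)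
    (by
      rintro u _ ⟨w, hw, hws, rfl⟩
      refine ⟨(u ⊗ₜ 1) * w, I.mul_mem_left _ _ hw, ?_, ?_⟩ <;>
        rw [equivFinsuppOfBasisRight_tmul_one_mul]
      · exact Finsupp.support_mapRange.trans hws
      · rfl)
    (by
      rintro _ u ⟨w, hw, hws, rfl⟩
      refine ⟨w * (u ⊗ₜ 1), I.mul_mem_right _ _ hw, ?_, ?_⟩ <;>
        rw [equivFinsuppOfBasisRight_mul_tmul_one]
      · exact Finsupp.support_mapRange.trans hws
      · rfl)
  have hzJ : κ z j ∈ J := (TwoSidedIdeal.mem_mk' ..).mpr ⟨z, hz, subset_rfl, rfl⟩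
  have h1J := IsSimpleRing.one_mem_of_ne_zero_mem J (Finsupp.mem_support_iff.mp hj) hzJ
  rwa [TwoSidedIdeal.mem_mk'] at h1J

end TensorProduct

open TensorProduct in
theorem TwoSidedIdeal.exists_one_tmul_mem_of_ne_bot {F A B : Type*} [Field F] [Ring A]
    [Algebra F A] [Ring B] [Algebra F B] [Algebra.IsCentral F A] [IsSimpleRing A]
    {I : TwoSidedIdeal (A ⊗[F] B)} (hI : I ≠ ⊥) : ∃ b ≠ 0, (1 : A) ⊗ₜ[F] b ∈ I := by
  classical
  set κ := equivFinsuppOfBasisRight (M := A) (Module.Free.chooseBasis F B)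
  obtain ⟨z, hzI, hz0⟩ : ∃ z ∈ I, z ≠ 0 := by
    by_contra! h
    exact hI (eq_bot_iff.mpr fun z hz ↦ (TwoSidedIdeal.mem_bot _).mpr (h z hz))
  induction hn : (κ z).support.card using Nat.strong_induction_on generalizing z with
  | _ n ih =>
  obtain ⟨j, hj⟩ : (κ z).support.Nonempty := by simpa using hz0
  obtain ⟨w, hwI, hws, hwj⟩ := exists_mem_support_subset_equivFinsuppOfBasisRight_eq_one _ hzI hj
  by_cases hcomm : ∀ a : A, (a ⊗ₜ[F] 1) * w = w * (a ⊗ₜ[F] (1 : B))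
  · have hw : w ∈ Subalgebra.centralizer F
        (Algebra.TensorProduct.includeLeft : A →ₐ[F] A ⊗[F] B).range := by
      rintro _ ⟨a, rfl⟩
      exact hcomm a
    rw [Subalgebra.centralizer_range_includeLeft_of_isCentral] at hw
    obtain ⟨b, rfl⟩ := hw
    refine ⟨b, ?_, hwI⟩
    rintro rfl
    simp at hwj
  · obtain ⟨a, ha⟩ := not_forall.mp hcomm
    have hκ : (κ ((a ⊗ₜ[F] 1) * w - w * (a ⊗ₜ[F] 1))).support ⊆ (κ z).support.erase j := by
      intro i hi
      rw [Finsupp.mem_support_iff, map_sub, equivFinsuppOfBasisRight_tmul_one_mul,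
        equivFinsuppOfBasisRight_mul_tmul_one] at hi
      simp only [Finsupp.coe_sub, Pi.sub_apply, Finsupp.mapRange_apply] at hi
      refine Finset.mem_erase.mpr ⟨?_, hws (Finsupp.mem_support_iff.mpr ?_)⟩
      · rintro rfl
        simp [hwj] at hi
      · rintro h0
        simp [h0] at hi
    exact ih _ (hn ▸ (Finset.card_le_card hκ).trans_lt (Finset.card_erase_lt_of_mem hj)) _
      (I.sub_mem (I.mul_mem_left _ _ hwI) (I.mul_mem_right _ _ hwI)) (sub_ne_zero.mpr ha) rfl

theorem IsSimpleRing.tensorProduct_of_isCentral {F A B : Type*} [Field F] [Ring A]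
    [Algebra F A] [Ring B] [Algebra F B] [Algebra.IsCentral F A] [IsSimpleRing A]
    [IsSimpleRing B] : IsSimpleRing (A ⊗[F] B) := by
  refine .of_eq_bot_or_eq_top fun I ↦ or_iff_not_imp_left.mpr fun hI ↦ ?_
  obtain ⟨b, hb, hbI⟩ := I.exists_one_tmul_mem_of_ne_bot hI
  have h1 := IsSimpleRing.one_mem_of_ne_zero_mem
    (I.comap (Algebra.TensorProduct.includeRight : B →ₐ[F] A ⊗[F] B)) hb
    (TwoSidedIdeal.mem_comap _ |>.mpr hbI)
  rw [TwoSidedIdeal.mem_comap, map_one, TwoSidedIdeal.one_mem_iff] at h1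
  exact h1

instance IsAzumaya.of_isCentral_of_isSimpleRing {F R : Type*} [Field F] [Ring R] [Algebra F R]
    [Algebra.IsCentral F R] [IsSimpleRing R] [FiniteDimensional F R] : IsAzumaya F R where
  bij := by
    have : IsSimpleRing (R ⊗[F] Rᵐᵒᵖ) := .tensorProduct_of_isCentral
    have hinj : Function.Injective (AlgHom.mulLeftRight F R) :=
      (AlgHom.mulLeftRight F R).toRingHom.injective
    refine ⟨hinj, (LinearMap.injective_iff_surjective_of_finrank_eq_finrank ?_
      (f := (AlgHom.mulLeftRight F R).toLinearMap)).mp hinj⟩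
    rw [Module.finrank_tensorProduct, Module.finrank_linearMap, MulOpposite.finrank]

noncomputable def IsAzumaya.tensorOpAlgEquivMatrix (F R : Type*) [Field F] [Ring R]
    [Algebra F R] [IsAzumaya F R] :
    R ⊗[F] Rᵐᵒᵖ ≃ₐ[F] Matrix (Fin (Module.finrank F R)) (Fin (Module.finrank F R)) F :=
  (AlgEquiv.ofBijective _ IsAzumaya.bij).trans (algEquivMatrix (Module.finBasis F R))

def IsSkolemNoetherAt (F S A : Type*) [CommSemiring F] [Semiring S] [Algebra F S] [Semiring A]
    [Algebra F A] : Prop :=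
  ∀ φ : A →ₐ[F] A ⊗[F] S, ∃ c : (A ⊗[F] S)ˣ, ∀ x : A, φ x = ↑c * (x ⊗ₜ[F] (1 : S)) * ↑c⁻¹

namespace IsSkolemNoetherAt

section

variable {F S A : Type*} [CommSemiring F] [Semiring S] [Algebra F S] [Semiring A] [Algebra F A]

theorem of_algEquiv {A' : Type*} [Semiring A'] [Algebra F A'] (e : A ≃ₐ[F] A')
    (h : IsSkolemNoetherAt F S A') : IsSkolemNoetherAt F S A := by
  intro φ
  let E := Algebra.TensorProduct.congr e (AlgEquiv.refl : S ≃ₐ[F] S)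
  obtain ⟨c, hc⟩ := h ((E.toAlgHom.comp φ).comp e.symm.toAlgHom)
  refine ⟨Units.map E.symm.toMonoidHom c, fun x ↦ E.injective ?_⟩
  have hE : E (x ⊗ₜ[F] 1) = e x ⊗ₜ[F] 1 := by simp [E]
  simpa [hE] using hc (e x)

theorem matrix {n : Type*} [Fintype n] [DecidableEq n]
    (h : ∀ φ : Matrix n n F →ₐ[F] Matrix n n S, ∃ c : (Matrix n n S)ˣ, ∀ x : Matrix n n F,
      φ x = Units.val c * x.map (algebraMap F S) * Units.val c⁻¹) :
    IsSkolemNoetherAt F S (Matrix n n F) := by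
  intro φ
  let E := (Algebra.TensorProduct.comm F (Matrix n n F) S).trans (matrixEquivTensor n F S).symm
  obtain ⟨c, hc⟩ := h (E.toAlgHom.comp φ)
  refine ⟨Units.map E.symm.toMonoidHom c, fun x ↦ E.injective ?_⟩
  have hE : E (x ⊗ₜ[F] 1) = x.map (algebraMap F S) := by simp [E, matrixEquivTensor_apply_symm]
  simpa [hE] using hc x

end

theorem of_tensorProduct_left {F S A B : Type*} [Field F] [Ring S] [Algebra F S] [Ring A]
    [Algebra F A] [Ring B] [Algebra F B] [Algebra.IsCentral F B] [Nontrivial B]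
    (h : IsSkolemNoetherAt F S (B ⊗[F] A)) : IsSkolemNoetherAt F S A := by
  intro φ
  let α := Algebra.TensorProduct.assoc F F F B A S
  obtain ⟨c, hc⟩ := h (α.symm.toAlgHom.comp (Algebra.TensorProduct.map (AlgHom.id F B) φ))
  obtain ⟨U, hU⟩ : ∃ U : (B ⊗[F] (A ⊗[F] S))ˣ, ∀ (b : B) (x : A),
      b ⊗ₜ[F] φ x = (U : B ⊗[F] (A ⊗[F] S)) * (b ⊗ₜ[F] (x ⊗ₜ[F] (1 : S))) * ↑U⁻¹ := by
    refine ⟨Units.map α.toMonoidHom c, fun b x ↦ ?_⟩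
    simpa [α] using congrArg α (hc (b ⊗ₜ x))
  obtain ⟨u, rfl⟩ := Algebra.TensorProduct.exists_map_includeRight_eq_of_commute U fun b ↦
    (Units.eq_mul_inv_iff_mul_eq _).mp (by simpa [Algebra.TensorProduct.one_def] using hU b 1)
  refine ⟨u, fun x ↦ Algebra.TensorProduct.includeRight_injective (A := B) (B := A ⊗[F] S)
    (algebraMap F B).injective ?_⟩
  simpa using hU 1 x

end IsSkolemNoetherAt

theorem skolemNoether_of_matrix (F : Type u) (S : Type v)
    [Field F] [Ring S] [Algebra F S]
    (h : ∀ (n : ℕ) (φ : Matrix (Fin n) (Fin n) F →ₐ[F] Matrix (Fin n) (Fin n) S),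
      ∃ c : (Matrix (Fin n) (Fin n) S)ˣ, ∀ x : Matrix (Fin n) (Fin n) F,
        φ x = Units.val c * x.map (algebraMap F S) * Units.val c⁻¹) :
    IsSkolemNoether F S := by
  intro R _ _ _ _ _ φ
  have hMat := IsSkolemNoetherAt.matrix (h (Module.finrank F R))
  have hOpR : IsSkolemNoetherAt F S (Rᵐᵒᵖ ⊗[F] R) := hMat.of_algEquiv
    ((Algebra.TensorProduct.comm F Rᵐᵒᵖ R).trans (IsAzumaya.tensorOpAlgEquivMatrix F R))
  exact hOpR.of_tensorProduct_left φ
end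

section
/- Let R be a central simple algebra and let S be a Skolem–Noether F-algebra. Then every F-algebra automorphism φ of R ⊗ S is the composition of an inner automorphism and an automorphism of the form id_R ⊗ σ where σ is an F-algebra automorphism of S; that is, there exist an invertible element c ∈ R ⊗ S and an F-algebra automorphism σ of S such that φ(x ⊗ s) = c (x ⊗ σ(s)) c⁻¹ for all x ∈ R and s ∈ S. -/
/-!
Skolem–Noether, applied to the restriction of `φ` to `R ⊗ 1`, gives a unit `c` such that
`ψ = c⁻¹ φ(·) c` fixes `R ⊗ 1` pointwise. Then `ψ` preserves the centralizer of `R ⊗ 1`, which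
is `1 ⊗ S` because `R` is central, and its restriction to `1 ⊗ S ≅ S` is the required `σ`.
-/

open scoped TensorProduct

universe u v w

open Algebra.TensorProduct Subalgebra

theorem Subalgebra.map_centralizer {K A B : Type*} [CommSemiring K] [Semiring A] [Algebra K A]
    [Semiring B] [Algebra K B] (ψ : A ≃ₐ[K] B) (s : Set A) :
    (centralizer K s).map (ψ : A →ₐ[K] B) = centralizer K (ψ '' s) := by
  ext z
  obtain ⟨y, rfl⟩ := ψ.surjective z
  simp [mem_centralizer_iff, ← map_mul, ψ.injective.eq_iff]

theorem Algebra.TensorProduct.centralizer_range_includeLeft_eq_range_includeRight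
    {K A B : Type*} [CommSemiring K] [Semiring A] [Algebra K A] [Semiring B] [Algebra K B]
    [Algebra.IsCentral K A] [Module.Free K B] :
    centralizer K (includeLeft : A →ₐ[K] A ⊗[K] B).range =
      (includeRight : B →ₐ[K] A ⊗[K] B).range := by
  rw [centralizer_coe_range_includeLeft_eq_center_tensorProduct, Algebra.IsCentral.center_eq_bot,
    map_range]
  simp [AlgHom.range_comp, range_val, Algebra.map_bot]

theorem Algebra.TensorProduct.exists_algEquiv_of_forall_apply_tmul_one
    {K A B : Type*} [CommSemiring K] [Semiring A] [Algebra K A] [Semiring B] [Algebra K B]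
    [Algebra.IsCentral K A] [FaithfulSMul K A] [Module.Free K B]
    (ψ : A ⊗[K] B ≃ₐ[K] A ⊗[K] B) (hψ : ∀ x : A, ψ (x ⊗ₜ 1) = x ⊗ₜ 1) :
    ∃ σ : B ≃ₐ[K] B, ∀ x b, ψ (x ⊗ₜ b) = x ⊗ₜ σ b := by
  have hfix : Set.EqOn ψ _root_.id (includeLeft : A →ₐ[K] A ⊗[K] B).range := by
    rintro _ ⟨x, rfl⟩
    exact hψ x
  have hmap : includeRight.range.map (ψ : A ⊗[K] B →ₐ[K] A ⊗[K] B) = includeRight.range := by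
    rw [← centralizer_range_includeLeft_eq_range_includeRight, map_centralizer, hfix.image_eq_self]
  let e : B ≃ₐ[K] (includeRight : B →ₐ[K] A ⊗[K] B).range :=
    AlgEquiv.ofInjective _ (includeRight_injective (FaithfulSMul.algebraMap_injective K A))
  let σ := e.trans ((ψ.subalgebraMap _).trans ((equivOfEq _ _ hmap).trans e.symm))
  have hσ (b : B) : (1 : A) ⊗ₜ[K] σ b = ψ (1 ⊗ₜ b) :=
    congrArg Subtype.val (e.apply_symm_apply _)
  refine ⟨σ, fun x b => ?_⟩
  have hsplit : x ⊗ₜ[K] b = (x ⊗ₜ 1) * (1 ⊗ₜ b) := by rw [tmul_mul_tmul, mul_one, one_mul]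
  rw [hsplit, map_mul, hψ, ← hσ, tmul_mul_tmul, mul_one, one_mul]

theorem aut_tensor_of_skolemNoether (F : Type u) (R : Type u) (S : Type v)
    [Field F] [Ring R] [Algebra F R] [Ring S] [Algebra F S]
    [FiniteDimensional F R] [IsSimpleRing R] [Algebra.IsCentral F R]
    (hS : IsSkolemNoether F S) (φ : (R ⊗[F] S) ≃ₐ[F] (R ⊗[F] S)) :
    ∃ (c : (R ⊗[F] S)ˣ) (σ : S ≃ₐ[F] S), ∀ (x : R) (s : S),
      φ (x ⊗ₜ[F] s) = Units.val c * (x ⊗ₜ[F] σ s) * Units.val c⁻¹ := by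
  obtain ⟨c, hc⟩ := hS R ‹_› ‹_› ‹_› ((φ : R ⊗[F] S →ₐ[F] R ⊗[F] S).comp includeLeft)
  let ψ := φ.trans (MulSemiringAction.toAlgEquiv F (R ⊗[F] S) (ConjAct.toConjAct c⁻¹))
  have hψ (y : R ⊗[F] S) : ψ y = ↑c⁻¹ * φ y * ↑c := by simp [ψ, ConjAct.units_smul_def]
  obtain ⟨σ, hσ⟩ := exists_algEquiv_of_forall_apply_tmul_one ψ fun x => by
    rw [hψ, show φ (x ⊗ₜ 1) = _ from hc x]
    simp [mul_assoc]
  refine ⟨c, σ, fun x s => ?_⟩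
  rw [← hσ, hψ]
  simp [mul_assoc]
end

section
/- If S is a Skolem–Noether F-algebra, then every F-algebra automorphism φ of the matrix algebra Mₙ(S) is of the form φ((s_{ij})) = c (σ(s_{ij})) c⁻¹, where c is an invertible element of Mₙ(S), σ is an F-algebra automorphism of S, and (σ(s_{ij})) denotes the matrix obtained by applying σ entrywise. -/
/-!
Since `Mₙ(S) ≅ Mₙ(F) ⊗ S` with `Mₙ(F)` central simple, the Skolem–Noether property applied to the
restriction of `φ` to `Mₙ(F)` gives a unit `c` such that `φ` agrees with conjugation by `c` on
`Mₙ(F)`. Hence `ψ = c⁻¹ φ c` fixes every matrix unit `eᵢⱼ`. Writing `s eᵢⱼ = eᵢₖ (s eₖₖ) eₖⱼ`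
shows `ψ (s eᵢⱼ) = σ(s) eᵢⱼ`, where `σ(s)` is the `(k, k)` entry of `ψ (s eₖₖ)`, and `σ` is an
automorphism of `S` because `s ↦ s eₖₖ` is multiplicative.
-/

open scoped TensorProduct

universe u v w

namespace Matrix

variable {F S n : Type*} [CommSemiring F] [Semiring S] [Algebra F S] [Fintype n] [DecidableEq n]

theorem map_single_of_map_single_one {G : Type*} [FunLike G (Matrix n n S) (Matrix n n S)]
    [MulHomClass G (Matrix n n S) (Matrix n n S)] {ψ : G}
    (hψ : ∀ i j, ψ (single i j 1) = single i j 1) (k i j : n) (s : S) :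
    ψ (single i j s) = single i j (ψ (single k k s) k k) := by
  have : single i j s = single i k 1 * single k k s * single k j 1 := by simp
  rw [this, map_mul, map_mul, hψ, hψ, single_mul_mul_single, one_mul, mul_one]

theorem eq_map_of_map_single_one {G : Type*} [FunLike G (Matrix n n S) (Matrix n n S)]
    [RingHomClass G (Matrix n n S) (Matrix n n S)] {ψ : G}
    (hψ : ∀ i j, ψ (single i j 1) = single i j 1) (k : n) (M : Matrix n n S) :
    ψ M = M.map fun s => ψ (single k k s) k k := by
  conv_lhs => rw [matrix_eq_sum_single M]
  conv_rhs => rw [matrix_eq_sum_single (M.map _)]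
  simp only [map_sum, map_apply]
  exact Finset.sum_congr rfl fun i _ => Finset.sum_congr rfl fun j _ =>
    map_single_of_map_single_one hψ k i j _

end Matrix

open Matrix

section

variable {F S n : Type*} [CommSemiring F] [Semiring S] [Algebra F S] [Fintype n] [DecidableEq n]
  [Nonempty n]

theorem AlgHom.exists_eq_mapMatrix_of_map_single_one (ψ : Matrix n n S →ₐ[F] Matrix n n S)
    (hψ : ∀ i j, ψ (single i j 1) = single i j 1) : ∃ σ : S →ₐ[F] S, ψ = σ.mapMatrix := by
  obtain ⟨k⟩ := ‹Nonempty n›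
  have hk := map_single_of_map_single_one hψ k k k
  let σ : S →ₐ[F] S := .ofLinearMap
    (entryLinearMap F S k k ∘ₗ ψ.toLinearMap ∘ₗ singleLinearMap F k k)
    (by simp [hψ])
    (fun s t => show ψ (single k k (s * t)) k k = ψ (single k k s) k k * ψ (single k k t) k k by
      rw [← single_mul_single_same k k k (c := s) t, map_mul, hk s, hk t,
        single_mul_single_same]; simp only [single_apply_same])
  exact ⟨σ, AlgHom.ext (eq_map_of_map_single_one hψ k)⟩

theorem AlgEquiv.exists_eq_mapMatrix_of_map_single_one (ψ : Matrix n n S ≃ₐ[F] Matrix n n S)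
    (hψ : ∀ i j, ψ (single i j 1) = single i j 1) : ∃ σ : S ≃ₐ[F] S, ψ = σ.mapMatrix := by
  have hψ_symm (i j : n) : ψ.symm (single i j 1) = single i j 1 :=
    ψ.symm_apply_eq.mpr (hψ i j).symm
  obtain ⟨σ, hσ⟩ := ψ.toAlgHom.exists_eq_mapMatrix_of_map_single_one hψ
  obtain ⟨τ, hτ⟩ := ψ.symm.toAlgHom.exists_eq_mapMatrix_of_map_single_one hψ_symm
  have hσ' (M : Matrix n n S) : ψ M = M.map σ := congr($hσ M)
  have hτ' (M : Matrix n n S) : ψ.symm M = M.map τ := congr($hτ M)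
  obtain ⟨k⟩ := ‹Nonempty n›
  have comp_eq_id {f g : S →ₐ[F] S} (h : ∀ M : Matrix n n S, (M.map g).map f = M) :
      f.comp g = AlgHom.id F S :=
    AlgHom.ext fun s => by simpa using congr($(h (of fun _ _ => s : Matrix n n S)) k k)
  refine ⟨.ofAlgHom σ τ (comp_eq_id fun M => ?_) (comp_eq_id fun M => ?_),
    AlgEquiv.ext fun M => ?_⟩
  · rw [← hτ', ← hσ', ψ.apply_symm_apply]
  · rw [← hσ', ← hτ', ψ.symm_apply_apply]
  · exact hσ' M

end

theorem IsSkolemNoether.exists_conj_map_algebraMap {F : Type u} {S : Type v} [Field F] [Ring S]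
    [Algebra F S] (hS : IsSkolemNoether F S) {n : Type} [Fintype n] [DecidableEq n] [Nonempty n]
    (φ : Matrix n n S →ₐ[F] Matrix n n S) :
    ∃ c : (Matrix n n S)ˣ, ∀ x : Matrix n n F,
      φ (x.map (algebraMap F S)) = Units.val c * x.map (algebraMap F S) * Units.val c⁻¹ := by
  let e : Matrix n n F ⊗[F] S ≃ₐ[F] Matrix n n S :=
    (Algebra.TensorProduct.comm F _ S).trans (matrixEquivTensor n F S).symm
  have he (x : Matrix n n F) : e (x ⊗ₜ 1) = x.map (algebraMap F S) := by simp [e]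
  obtain ⟨c, hc⟩ := hS _ inferInstance inferInstance inferInstance
    ((e.symm : Matrix n n S →ₐ[F] _).comp (φ.comp (Algebra.ofId F S).mapMatrix))
  refine ⟨Units.map (e : _ →* Matrix n n S) c, fun x => ?_⟩
  have h := congrArg e (hc x)
  simp [he] at h
  exact h

theorem aut_matrix_of_skolemNoether (F : Type u) (S : Type v)
    [Field F] [Ring S] [Algebra F S] (hS : IsSkolemNoether F S) (n : ℕ)
    (φ : Matrix (Fin n) (Fin n) S ≃ₐ[F] Matrix (Fin n) (Fin n) S) :
    ∃ (c : (Matrix (Fin n) (Fin n) S)ˣ) (σ : S ≃ₐ[F] S),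
      ∀ M : Matrix (Fin n) (Fin n) S,
        φ M = Units.val c * M.map σ * Units.val c⁻¹ := by
  obtain _ | m := n
  · exact ⟨1, .refl, fun M => Subsingleton.elim _ _⟩
  obtain ⟨c, hc⟩ := hS.exists_conj_map_algebraMap φ.toAlgHom
  let ψ := φ.trans (MulSemiringAction.toAlgEquiv F _ (ConjAct.toConjAct c⁻¹))
  have hψ (M) : ψ M = Units.val c⁻¹ * φ M * Units.val c := by simp [ψ, ConjAct.units_smul_def]
  have hψ_single (i j) : ψ (single i j 1) = single i j 1 := by
    simpa [hψ, mul_assoc] using congrArg (Units.val c⁻¹ * · * Units.val c) (hc (single i j 1))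
  obtain ⟨σ, hσ⟩ := ψ.exists_eq_mapMatrix_of_map_single_one hψ_single
  refine ⟨c, σ, fun M => ?_⟩
  simp [← AlgEquiv.mapMatrix_apply, ← hσ, hψ, mul_assoc]
end

section
/- If S₁ and S₂ are Skolem–Noether F-algebras, then their direct product S₁ × S₂ is a Skolem–Noether algebra. -/
open scoped TensorProduct

universe u v w

/-! Since `R ⊗ (S₁ × S₂) ≃ₐ (R ⊗ S₁) × (R ⊗ S₂)`, a homomorphism `φ : R → R ⊗ (S₁ × S₂)` splits
into its two components `φᵢ : R → R ⊗ Sᵢ`. Each is conjugate to `x ↦ x ⊗ 1` by a unit `cᵢ`, and the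
pair `(c₁, c₂)` is a unit of the product conjugating `φ` to `x ↦ x ⊗ 1`. -/

def AreConjugateByUnit {X M : Type*} [Monoid M] (f g : X → M) : Prop :=
  ∃ c : Mˣ, ∀ x, f x = c * g x * ↑c⁻¹

namespace AreConjugateByUnit

variable {X M N : Type*} [Monoid M] [Monoid N]

theorem prod {f₁ g₁ : X → M} {f₂ g₂ : X → N}
    (h₁ : AreConjugateByUnit f₁ g₁) (h₂ : AreConjugateByUnit f₂ g₂) :
    AreConjugateByUnit (fun x => (f₁ x, f₂ x)) (fun x => (g₁ x, g₂ x)) := by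
  obtain ⟨c₁, hc₁⟩ := h₁
  obtain ⟨c₂, hc₂⟩ := h₂
  exact ⟨MulEquiv.prodUnits.symm (c₁, c₂), fun x => Prod.ext (hc₁ x) (hc₂ x)⟩

theorem of_mulEquiv (e : M ≃* N) {f g : X → M}
    (h : AreConjugateByUnit (fun x => e (f x)) (fun x => e (g x))) :
    AreConjugateByUnit f g := by
  obtain ⟨c, hc⟩ := h
  refine ⟨Units.map e.symm.toMonoidHom c, fun x => e.injective ?_⟩
  simp [hc x]

end AreConjugateByUnit

theorem isSkolemNoether_prod (F : Type u) (S₁ : Type v) (S₂ : Type v)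
    [Field F] [Ring S₁] [Algebra F S₁] [Ring S₂] [Algebra F S₂]
    (h₁ : IsSkolemNoether F S₁) (h₂ : IsSkolemNoether F S₂) :
    IsSkolemNoether F (S₁ × S₂) := by
  intro R _ _ hfd hsimple hcentral φ
  let e := Algebra.TensorProduct.prodRight F F R S₁ S₂
  have hconj₁ : AreConjugateByUnit (fun x => (e (φ x)).1) (fun x => x ⊗ₜ[F] (1 : S₁)) :=
    h₁ R hfd hsimple hcentral ((AlgHom.fst F _ _).comp (e.toAlgHom.comp φ))
  have hconj₂ : AreConjugateByUnit (fun x => (e (φ x)).2) (fun x => x ⊗ₜ[F] (1 : S₂)) :=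
    h₂ R hfd hsimple hcentral ((AlgHom.snd F _ _).comp (e.toAlgHom.comp φ))
  -- `e (x ⊗ₜ 1) = (x ⊗ₜ 1, x ⊗ₜ 1)` and `e y = ((e y).1, (e y).2)` hold definitionally.
  exact (hconj₁.prod hconj₂).of_mulEquiv e.toMulEquiv
end

section
/- An F-algebra S is a Skolem–Noether algebra if and only if the formal power series algebra S[[ξ]] in one variable over S is a Skolem–Noether algebra. -/
/-!
Write `ε` for reduction modulo `ξ`. Since `R` is finite-dimensional, `R ⊗ S[[ξ]] ≅ (R ⊗ S)[[ξ]]`.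
Given `φ : R → (R ⊗ S)[[ξ]]`, the Skolem–Noether property of `S` applied to `ε ∘ φ` yields a
homomorphism `χ`, conjugate to `x ↦ x ⊗ 1`, with `ε ∘ χ = ε ∘ φ`. A central simple algebra is
separable (Artin–Whaples: `R ⊗ Rᵒᵖ ≅ End_F R`), so it has a separability element
`e = ∑ xᵢ ⊗ yᵢ`; then `c = ∑ φ(xᵢ) χ(yᵢ)` satisfies `φ(x) c = c χ(x)` and `ε(c) = 1`, so `c` is a
unit of the power series ring and `φ` is conjugate to `χ`. Conversely, `S` is a retract of
`S[[ξ]]` (constants and constant coefficient), and the Skolem–Noether property passes to retracts.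
-/

open scoped TensorProduct

universe u v w

open MulOpposite

section ArtinWhaples

variable {F R : Type*} [Field F] [Ring R] [Algebra F R] {ι : Type*}

theorem IsSimpleRing.exists_eq_one_of_forall_sum_mul_mul_eq_zero [IsSimpleRing R]
    (b : ι → R) (s : Finset ι) {x : ι → R} (hx : ∀ z, ∑ i ∈ s, x i * z * b i = 0) {i₀ : ι}
    (hi₀ : x i₀ ≠ 0) : ∃ y : ι → R, (∀ z, ∑ i ∈ s, y i * z * b i = 0) ∧ y i₀ = 1 := by
  let P : (ι → R) → Prop := fun y ↦ ∀ z, ∑ i ∈ s, y i * z * b i = 0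
  let I : TwoSidedIdeal R := .mk' {r | ∃ y, P y ∧ y i₀ = r}
    ⟨0, fun z ↦ by simp, rfl⟩
    (by
      rintro _ _ ⟨y, hy, rfl⟩ ⟨y', hy', rfl⟩
      exact ⟨y + y', fun z ↦ by simp [add_mul, Finset.sum_add_distrib, hy z, hy' z], rfl⟩)
    (by
      rintro _ ⟨y, hy, rfl⟩
      exact ⟨-y, fun z ↦ by simp [Finset.sum_neg_distrib, hy z], rfl⟩)
    (by
      rintro a _ ⟨y, hy, rfl⟩
      exact ⟨fun i ↦ a * y i, fun z ↦ by
        simpa only [mul_assoc, ← Finset.mul_sum, mul_zero] using congrArg (a * ·) (hy z), rfl⟩)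
    (by
      rintro _ a ⟨y, hy, rfl⟩
      exact ⟨fun i ↦ y i * a, fun z ↦ by simpa [mul_assoc] using hy (a * z), rfl⟩)
  have : (1 : R) ∈ I :=
    IsSimpleRing.one_mem_of_ne_zero_mem I hi₀ ((TwoSidedIdeal.mem_mk' ..).mpr ⟨x, hx, rfl⟩)
  simpa [I] using this

theorem LinearIndependent.eq_zero_of_forall_sum_mul_mul_eq_zero [IsSimpleRing R]
    [Algebra.IsCentral F R] {b : ι → R} (hb : LinearIndependent F b) (s : Finset ι) :
    ∀ x : ι → R, (∀ z, ∑ i ∈ s, x i * z * b i = 0) → ∀ i ∈ s, x i = 0 := by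
  classical
  induction s using Finset.strongInduction with
  | _ s ih =>
  intro x hx
  by_contra! ⟨i₀, hi₀s, hi₀⟩
  obtain ⟨y, hy, hyi₀⟩ := IsSimpleRing.exists_eq_one_of_forall_sum_mul_mul_eq_zero b s hx hi₀
  -- the commutators `[a, y i]` solve the same system with one unknown fewer
  have hcomm : ∀ a, ∀ i ∈ s, a * y i = y i * a := by
    intro a i hi
    have hsol : ∀ z, ∑ i ∈ s.erase i₀, (a * y i - y i * a) * z * b i = 0 := by
      intro z
      rw [Finset.sum_erase _ (by simp [hyi₀])]
      have h₁ := congrArg (a * ·) (hy z)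
      have h₂ := hy (a * z)
      simp only [mul_zero, Finset.mul_sum] at h₁
      simp only [sub_mul, Finset.sum_sub_distrib, mul_assoc] at h₁ h₂ ⊢
      rw [h₁, h₂, sub_zero]
    by_cases h : i = i₀
    · simp [h, hyi₀]
    · exact sub_eq_zero.mp
        (ih _ (Finset.erase_ssubset hi₀s) _ hsol i (Finset.mem_erase.mpr ⟨h, hi⟩))
  have hcentral : ∀ i ∈ s, ∃ c : F, y i = algebraMap F R c := fun i hi ↦
    (Algebra.IsCentral.mem_center_iff F).mp (Subalgebra.mem_center_iff.mpr fun a ↦ hcomm a i hi)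
  choose! c hc using hcentral
  have hlin : ∑ i ∈ s, c i • b i = 0 := by
    rw [← hy 1]
    exact Finset.sum_congr rfl fun i hi ↦ by rw [hc i hi, mul_one, Algebra.smul_def]
  have := linearIndependent_iff'.mp hb s c hlin i₀ hi₀s
  simp [hc i₀ hi₀s, this] at hyi₀

end ArtinWhaples

section Azumaya

variable {F R : Type*} [Field F] [Ring R] [Algebra F R]

theorem AlgHom.mulLeftRight_injective [IsSimpleRing R] [Algebra.IsCentral F R] :
    Function.Injective (AlgHom.mulLeftRight F R) := by
  let b := Module.Basis.ofVectorSpace F R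
  rw [injective_iff_map_eq_zero]
  intro u hu
  obtain ⟨c, rfl⟩ := TensorProduct.eq_repr_basis_right b.mulOpposite u
  have hc : ∀ z, ∑ i ∈ c.support, c i * z * b i = 0 := fun z ↦ by
    simpa [Finsupp.sum, map_finsuppSum] using LinearMap.congr_fun hu z
  have : c = 0 := Finsupp.ext fun i ↦ by
    by_cases hi : i ∈ c.support
    · exact b.linearIndependent.eq_zero_of_forall_sum_mul_mul_eq_zero _ c hc i hi
    · simpa using hi
  simp [this]

theorem IsAzumaya.of_isSimpleRing [FiniteDimensional F R] [IsSimpleRing R]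
    [Algebra.IsCentral F R] : IsAzumaya F R where
  bij := by
    refine ⟨AlgHom.mulLeftRight_injective, ?_⟩
    rw [← AlgHom.coe_toLinearMap, ← LinearMap.injective_iff_surjective_of_finrank_eq_finrank]
    · exact AlgHom.mulLeftRight_injective
    · rw [Module.finrank_tensorProduct, MulOpposite.finrank, Module.finrank_linearMap]

theorem IsAzumaya.exists_separabilityElement [IsAzumaya F R] :
    ∃ e : R ⊗[F] Rᵐᵒᵖ, AlgHom.mulLeftRight F R e 1 = 1 ∧
      ∀ a : R, (a ⊗ₜ 1) * e = (1 ⊗ₜ op a) * e := by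
  obtain ⟨t, ht⟩ := (Algebra.linearMap F R).exists_leftInverse_of_injective
    (LinearMap.ker_eq_bot.mpr (FaithfulSMul.algebraMap_injective F R))
  have ht1 : t 1 = 1 := by simpa using LinearMap.congr_fun ht 1
  obtain ⟨e, he⟩ := IsAzumaya.bij.2 (t.smulRight (1 : R))
  refine ⟨e, by simp [he, ht1], fun a ↦ IsAzumaya.bij.1 ?_⟩
  ext z
  simp [he]

end Azumaya

section Conjugacy

variable {F R A B : Type*} [Field F] [Ring R] [Algebra F R] [Ring A] [Algebra F A]
  [Ring B] [Algebra F B]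

def AlgHom.tensorOpMul (φ χ : R →ₐ[F] A) : R ⊗[F] Rᵐᵒᵖ →ₗ[F] A :=
  LinearMap.mul' F A ∘ₗ
    TensorProduct.map φ.toLinearMap (χ.toLinearMap ∘ₗ (opLinearEquiv F).symm.toLinearMap)

namespace AlgHom

variable (φ χ : R →ₐ[F] A)

@[simp]
theorem tensorOpMul_tmul (x : R) (y : Rᵐᵒᵖ) : tensorOpMul φ χ (x ⊗ₜ y) = φ x * χ y.unop := rfl

theorem tensorOpMul_tmul_one_mul (a : R) (u : R ⊗[F] Rᵐᵒᵖ) :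
    tensorOpMul φ χ ((a ⊗ₜ 1) * u) = φ a * tensorOpMul φ χ u := by
  induction u with
  | zero => simp
  | tmul x y => simp [mul_assoc]
  | add u v hu hv => simp [mul_add, hu, hv]

theorem tensorOpMul_one_tmul_op_mul (a : R) (u : R ⊗[F] Rᵐᵒᵖ) :
    tensorOpMul φ χ ((1 ⊗ₜ op a) * u) = tensorOpMul φ χ u * χ a := by
  induction u with
  | zero => simp
  | tmul x y => simp [mul_assoc]
  | add u v hu hv => simp [mul_add, add_mul, hu, hv]

theorem comp_tensorOpMul (π : A →ₐ[F] B) (u : R ⊗[F] Rᵐᵒᵖ) :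
    π (tensorOpMul φ χ u) = tensorOpMul (π.comp φ) (π.comp χ) u := by
  induction u with
  | zero => simp
  | tmul x y => simp
  | add u v hu hv => simp [hu, hv]

theorem tensorOpMul_self (u : R ⊗[F] Rᵐᵒᵖ) :
    tensorOpMul χ χ u = χ (AlgHom.mulLeftRight F R u 1) := by
  induction u with
  | zero => simp
  | tmul x y => simp
  | add u v hu hv => simp [hu, hv]

end AlgHom

theorem IsAzumaya.exists_conj_of_comp_eq [IsAzumaya F R] (π : A →ₐ[F] B)
    (hπ : ∀ a, IsUnit (π a) → IsUnit a) {φ χ : R →ₐ[F] A} (h : π.comp φ = π.comp χ) :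
    ∃ u : Aˣ, ∀ x, φ x = u * χ x * ↑u⁻¹ := by
  obtain ⟨e, he1, he⟩ := IsAzumaya.exists_separabilityElement (F := F) (R := R)
  let c := AlgHom.tensorOpMul φ χ e
  have hc : ∀ x, φ x * c = c * χ x := fun x ↦ by
    rw [← AlgHom.tensorOpMul_tmul_one_mul, he, AlgHom.tensorOpMul_one_tmul_op_mul]
  have hπc : π c = 1 := by
    rw [AlgHom.comp_tensorOpMul, h, AlgHom.tensorOpMul_self, he1, map_one]
  obtain ⟨u, hu⟩ := hπ c (hπc ▸ isUnit_one)
  exact ⟨u, fun x ↦ by rw [hu, ← hc, ← hu, Units.mul_inv_cancel_right]⟩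

end Conjugacy

open PowerSeries

noncomputable section

namespace PowerSeries

variable (F A : Type*) [CommSemiring F] [Semiring A] [Algebra F A]

def CAlgHom : A →ₐ[F] A⟦X⟧ :=
  { C with commutes' := fun _ ↦ (algebraMap_apply ..).symm }

def constantCoeffAlgHom : A⟦X⟧ →ₐ[F] A :=
  { constantCoeff with commutes' := fun _ ↦ by simp [algebraMap_apply] }

@[simp] theorem CAlgHom_apply (a : A) : CAlgHom F A a = C a := rfl

@[simp] theorem constantCoeffAlgHom_apply (f : A⟦X⟧) :
    constantCoeffAlgHom F A f = constantCoeff f := rfl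

end PowerSeries

section TensorPowerSeries

open Algebra.TensorProduct

variable (F R S : Type*) [CommSemiring F] [Semiring R] [Algebra F R] [Semiring S] [Algebra F S]

def tensorPowerSeriesHom : R ⊗[F] S⟦X⟧ →ₐ[F] (R ⊗[F] S)⟦X⟧ :=
  lift ((CAlgHom F _).comp includeLeft) (mapAlgHom includeRight) fun x g ↦
    show Commute _ _ from PowerSeries.ext fun n ↦ by simp [coeff_mul_C, mapAlgHom_apply]

variable {F R S}

@[simp]
theorem tensorPowerSeriesHom_tmul_one (x : R) :
    tensorPowerSeriesHom F R S (x ⊗ₜ 1) = C (x ⊗ₜ 1) := by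
  rw [tensorPowerSeriesHom, Algebra.TensorProduct.lift_tmul]
  simp

@[simp]
theorem coeff_tensorPowerSeriesHom_tmul (x : R) (g : S⟦X⟧) (n : ℕ) :
    coeff n (tensorPowerSeriesHom F R S (x ⊗ₜ g)) = x ⊗ₜ coeff n g := by
  rw [tensorPowerSeriesHom, Algebra.TensorProduct.lift_tmul]
  simp [mapAlgHom_apply]

open TensorProduct in
theorem equivFinsuppOfBasisLeft_coeff_tensorPowerSeriesHom {ι : Type*} [DecidableEq ι]
    (b : Module.Basis ι F R) (u : R ⊗[F] S⟦X⟧) (n : ℕ) (i : ι) :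
    equivFinsuppOfBasisLeft b (coeff n (tensorPowerSeriesHom F R S u)) i =
      coeff n (equivFinsuppOfBasisLeft b u i) := by
  induction u with
  | zero => simp
  | tmul x g => simp
  | add u v hu hv => simp [hu, hv]

open TensorProduct in
theorem tensorPowerSeriesHom_bijective [Module.Free F R] [Module.Finite F R] :
    Function.Bijective (tensorPowerSeriesHom F R S) := by
  classical
  let π {M : Type _} [AddCommMonoid M] [Module F M] := equivFinsuppOfBasisLeft (M := R) (N := M)
    (Module.Free.chooseBasis F R)
  refine ⟨fun u v h ↦ π.injective ?_, fun f ↦ ?_⟩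
  · ext i n
    rw [← equivFinsuppOfBasisLeft_coeff_tensorPowerSeriesHom,
      ← equivFinsuppOfBasisLeft_coeff_tensorPowerSeriesHom, h]
  · obtain ⟨u, hu⟩ := π.surjective
      (Finsupp.equivFunOnFinite.symm fun i ↦ mk fun n ↦ π (coeff n f) i)
    refine ⟨u, ext fun n ↦ π.injective (Finsupp.ext fun i ↦ ?_)⟩
    rw [equivFinsuppOfBasisLeft_coeff_tensorPowerSeriesHom, hu]
    simp

variable (F R S) in
def tensorPowerSeriesEquiv [Module.Free F R] [Module.Finite F R] :
    R ⊗[F] S⟦X⟧ ≃ₐ[F] (R ⊗[F] S)⟦X⟧ :=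
  .ofBijective _ tensorPowerSeriesHom_bijective

@[simp]
theorem tensorPowerSeriesEquiv_tmul_one [Module.Free F R] [Module.Finite F R] (x : R) :
    tensorPowerSeriesEquiv F R S (x ⊗ₜ 1) = C (x ⊗ₜ 1) :=
  tensorPowerSeriesHom_tmul_one x

end TensorPowerSeries

end

namespace IsSkolemNoether

variable {F : Type u} [Field F]

theorem of_retract {S : Type v} {T : Type*} [Ring S] [Algebra F S] [Ring T] [Algebra F T]
    (i : S →ₐ[F] T) (p : T →ₐ[F] S) (hpi : p.comp i = AlgHom.id F S)
    (hT : IsSkolemNoether F T) : IsSkolemNoether F S := by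
  intro R _ _ hfin hsimple hcentral φ
  let P := Algebra.TensorProduct.map (AlgHom.id F R) p
  have hPi : ∀ y, P (Algebra.TensorProduct.map (AlgHom.id F R) i y) = y := by
    intro y
    rw [← AlgHom.comp_apply, ← Algebra.TensorProduct.map_comp, hpi, AlgHom.comp_id,
      Algebra.TensorProduct.map_id, AlgHom.id_apply]
  obtain ⟨c, hc⟩ :=
    hT R hfin hsimple hcentral ((Algebra.TensorProduct.map (AlgHom.id F R) i).comp φ)
  refine ⟨Units.map P c, fun x ↦ ?_⟩
  simpa [P, hPi] using congrArg P (hc x)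

theorem powerSeries {S : Type v} [Ring S] [Algebra F S] (hS : IsSkolemNoether F S) :
    IsSkolemNoether F S⟦X⟧ := by
  intro R _ _ hfin hsimple hcentral φ
  have := IsAzumaya.of_isSimpleRing (F := F) (R := R)
  let Φ := tensorPowerSeriesEquiv F R S
  let ε := constantCoeffAlgHom F (R ⊗[F] S)
  let incl : R →ₐ[F] (R ⊗[F] S)⟦X⟧ := (CAlgHom F _).comp Algebra.TensorProduct.includeLeft
  obtain ⟨c₀, hc₀⟩ := hS R hfin hsimple hcentral (ε.comp (Φ.toAlgHom.comp φ))
  let C₀ : (R ⊗[F] S)⟦X⟧ˣ := Units.map (C (R := R ⊗[F] S)).toMonoidHom c₀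
  obtain ⟨u, hu⟩ := IsAzumaya.exists_conj_of_comp_eq ε (fun _ ↦ isUnit_iff_constantCoeff.mpr)
    (φ := Φ.toAlgHom.comp φ)
    (χ := (MulSemiringAction.toAlgHom F _ (ConjAct.toConjAct C₀)).comp incl)
    (AlgHom.ext fun x ↦ by simpa [ConjAct.units_smul_def, C₀, incl, ε] using hc₀ x)
  refine ⟨Units.map Φ.symm.toAlgHom.toMonoidHom (u * C₀), fun x ↦ Φ.injective ?_⟩
  simpa [Φ, incl, ConjAct.units_smul_def, mul_assoc] using hu x

end IsSkolemNoether

theorem isSkolemNoether_iff_powerSeries (F : Type u) (S : Type v)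
    [Field F] [Ring S] [Algebra F S] :
    IsSkolemNoether F S ↔ IsSkolemNoether F (PowerSeries S) :=
  ⟨IsSkolemNoether.powerSeries, IsSkolemNoether.of_retract (PowerSeries.CAlgHom F S)
    (PowerSeries.constantCoeffAlgHom F S) (AlgHom.ext constantCoeff_C)⟩
end
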